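/- arXiv:2504.04912 — 3 statements merged into one kernel-verified Lean document; each statement's English description precedes it below -/
import Mathlib

section
/- Let H be a real Hilbert space and let C₁, ..., C_m be nonempty subsets of H. Let (y_k)_{k≥1} be a sequence in H such that ‖y_k - y_{k+1}‖ → 0 and such that for every k, y_{k+1} ∈ C_{i(k+1)} where i(k) = ((k-1) mod m) + 1 is the cyclic control. Then for each i ∈ {1,...,m}, dist(y_k, C_i) → 0 as k → ∞. -/
private lemma teles {H : Type*} [NormedAddCommGroup H] (y : ℕ → H) (a : ℕ) :
    ∀ n : ℕ, ‖y a - y (a + n)‖ ≤ ∑ t ∈ Finset.range n, ‖y (a + t) - y (a + t + 1)‖ := by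
  intro n
  induction n with
  | zero => simp
  | succ n ih =>
      rw [Finset.sum_range_succ]
      calc ‖y a - y (a + (n + 1))‖
          ≤ ‖y a - y (a + n)‖ + ‖y (a + n) - y (a + (n + 1))‖ := by
            simpa using norm_sub_le_norm_sub_add_norm_sub (y a) (y (a + n)) (y (a + (n + 1)))
        _ ≤ (∑ t ∈ Finset.range n, ‖y (a + t) - y (a + t + 1)‖) + ‖y (a + n) - y (a + n + 1)‖ := by
            apply add_le_add ih
            simp [Nat.add_assoc]

theorem stmt_4 {H : Type*} [NormedAddCommGroup H] [InnerProductSpace ℝ H]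
    {m : ℕ} (hm : 0 < m) (C : Fin m → Set H) (hne : ∀ i, (C i).Nonempty)
    (y : ℕ → H)
    (hstep : Filter.Tendsto (fun k => ‖y k - y (k + 1)‖) Filter.atTop (nhds 0))
    (hcyc : ∀ k : ℕ, y (k + 1) ∈ C ⟨k % m, Nat.mod_lt k hm⟩) :
    ∀ i : Fin m,
      Filter.Tendsto (fun k => Metric.infDist (y k) (C i)) Filter.atTop (nhds 0) := by
  intro i
  have hbound : ∀ k : ℕ,
      Metric.infDist (y k) (C i) ≤ ∑ t ∈ Finset.range m, ‖y (k + t) - y (k + t + 1)‖ := by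
    intro k
    set d : ℕ := (i.val + m - k % m) % m with hdDef
    have hd : d < m := Nat.mod_lt _ hm
    have hkm : k % m < m := Nat.mod_lt k hm
    have h1 : (k + d) % m = i.val := by
      have hd' : d % m = d := Nat.mod_eq_of_lt hd
      rw [Nat.add_mod, hd', hdDef, Nat.add_mod_mod]
      have h2 : k % m + (i.val + m - k % m) = m + i.val := by omega
      rw [h2, Nat.add_mod_left, Nat.mod_eq_of_lt i.isLt]
    have hmem : y (k + d + 1) ∈ C i := by
      have h := hcyc (k + d)
      have : (⟨(k + d) % m, Nat.mod_lt (k + d) hm⟩ : Fin m) = i := Fin.ext h1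
      rwa [this] at h
    calc Metric.infDist (y k) (C i) ≤ dist (y k) (y (k + d + 1)) :=
          Metric.infDist_le_dist_of_mem hmem
      _ = ‖y k - y (k + (d + 1))‖ := by rw [dist_eq_norm, Nat.add_assoc]
      _ ≤ ∑ t ∈ Finset.range (d + 1), ‖y (k + t) - y (k + t + 1)‖ := teles y k (d + 1)
      _ ≤ ∑ t ∈ Finset.range m, ‖y (k + t) - y (k + t + 1)‖ := by
          apply Finset.sum_le_sum_of_subset_of_nonneg
          · exact Finset.range_subset_range.mpr hd
          · intro _ _ _; positivity
  have hsum : Filter.Tendsto (fun k => ∑ t ∈ Finset.range m, ‖y (k + t) - y (k + t + 1)‖)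
      Filter.atTop (nhds 0) := by
    have : Filter.Tendsto (fun k => ∑ t ∈ Finset.range m, ‖y (k + t) - y (k + t + 1)‖)
        Filter.atTop (nhds (∑ t ∈ Finset.range m, (0 : ℝ))) := by
      apply tendsto_finset_sum
      intro t _
      exact hstep.comp (Filter.tendsto_add_atTop_nat t)
    simpa using this
  exact squeeze_zero (fun k => Metric.infDist_nonneg) hbound hsum
end

section
/- Let H be a real Hilbert space, let Ω₁, ..., Ω_m be nonempty closed convex pairwise disjoint subsets of H with union Ω, and let D ⊆ H be a nonempty convex set such that for every x ∈ D the best-approximation set P_Ω(x) is a singleton. Then there exists an index s ∈ {1,...,m} such that P_Ω(x) ∈ Ω_s for all x ∈ D. -/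
theorem stmt_6 {H : Type*} [NormedAddCommGroup H] [InnerProductSpace ℝ H] [CompleteSpace H]
    {m : ℕ} (hm : 0 < m) (Ω : Fin m → Set H)
    (hne : ∀ s, (Ω s).Nonempty) (hcl : ∀ s, IsClosed (Ω s)) (hcv : ∀ s, Convex ℝ (Ω s))
    (hdisj : ∀ s t, s ≠ t → Ω s ∩ Ω t = ∅)
    {D : Set H} (hDne : D.Nonempty) (hDcv : Convex ℝ D)
    (P : H → H)
    (hP : ∀ x ∈ D, P x ∈ (⋃ s, Ω s) ∧ ‖x - P x‖ = Metric.infDist x (⋃ s, Ω s))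
    (huniq : ∀ x ∈ D, ∀ w, w ∈ (⋃ s, Ω s) → ‖x - w‖ = Metric.infDist x (⋃ s, Ω s) → w = P x) :
    ∃ s : Fin m, ∀ x ∈ D, P x ∈ Ω s := by
  classical
  set Ωu : Set H := ⋃ s, Ω s with hΩu
  have hsub : ∀ t : Fin m, Ω t ⊆ Ωu := fun t => Set.subset_iUnion Ω t
  -- proximinality of each component
  have prox : ∀ (x : H) (t : Fin m), ∃ w ∈ Ω t, ‖x - w‖ = Metric.infDist x (Ω t) := by
    intro x t
    obtain ⟨w, hw, hwn⟩ := exists_norm_eq_iInf_of_complete_convex (hne t)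
      (hcl t).isComplete (hcv t) x
    refine ⟨w, hw, ?_⟩
    rw [hwn, Metric.infDist_eq_iInf]
    simp_rw [dist_eq_norm]
  have hled : ∀ (x : H) (t : Fin m), Metric.infDist x Ωu ≤ Metric.infDist x (Ω t) :=
    fun x t => Metric.infDist_le_infDist_of_subset (hsub t) (hne t)
  -- strict inequality for components not containing P x
  have key : ∀ x ∈ D, ∀ t : Fin m, P x ∉ Ω t →
      Metric.infDist x Ωu < Metric.infDist x (Ω t) := by
    intro x hx t hPt
    rcases (hled x t).lt_or_eq with h | h
    · exact h
    · exfalso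
      obtain ⟨w, hw, hwn⟩ := prox x t
      have hwP : w = P x := huniq x hx w (hsub t hw) (by rw [hwn, ← h])
      exact hPt (hwP ▸ hw)
  -- index function
  have hSx : ∀ x ∈ D, ∃ t, P x ∈ Ω t := by
    intro x hx
    exact Set.mem_iUnion.mp (hP x hx).1
  set S : H → Fin m := fun x => if h : ∃ t, P x ∈ Ω t then h.choose else ⟨0, hm⟩ with hSdef
  have hS : ∀ x ∈ D, P x ∈ Ω (S x) := by
    intro x hx
    have h := hSx x hx
    simp only [hSdef, dif_pos h]
    exact h.choose_spec
  have hSuniq : ∀ x ∈ D, ∀ t, P x ∈ Ω t → S x = t := by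
    intro x hx t ht
    by_contra hne'
    have := hdisj (S x) t hne'
    have : P x ∈ Ω (S x) ∩ Ω t := ⟨hS x hx, ht⟩
    rw [hdisj (S x) t hne'] at this
    exact this
  -- the open sets
  set U : Fin m → Set H := fun t =>
    {x | ∀ t', t' ≠ t → Metric.infDist x (Ω t) < Metric.infDist x (Ω t')} with hUdef
  have hUopen : ∀ t, IsOpen (U t) := by
    intro t
    have : U t = ⋂ t', {x | t' ≠ t → Metric.infDist x (Ω t) < Metric.infDist x (Ω t')} := by
      ext x; simp [hUdef]
    rw [this]
    refine isOpen_iInter_of_finite fun t' => ?_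
    by_cases h : t' = t
    · simp [h]
    · have : {x | t' ≠ t → Metric.infDist x (Ω t) < Metric.infDist x (Ω t')} =
          {x | Metric.infDist x (Ω t) < Metric.infDist x (Ω t')} := by
        ext x; simp [h]
      rw [this]
      exact isOpen_lt (Metric.continuous_infDist_pt _) (Metric.continuous_infDist_pt _)
  have hxU : ∀ x ∈ D, x ∈ U (S x) := by
    intro x hx t' ht'
    have h1 : Metric.infDist x (Ω (S x)) ≤ Metric.infDist x Ωu := by
      calc Metric.infDist x (Ω (S x)) ≤ dist x (P x) := Metric.infDist_le_dist_of_mem (hS x hx)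
        _ = ‖x - P x‖ := by rw [dist_eq_norm]
        _ = Metric.infDist x Ωu := (hP x hx).2
    have h2 : P x ∉ Ω t' := by
      intro hmem
      exact ht' (hSuniq x hx t' hmem).symm
    exact lt_of_le_of_lt h1 (key x hx t' h2)
  have hUdisj : ∀ t t', t ≠ t' → Disjoint (U t) (U t') := by
    intro t t' htt'
    rw [Set.disjoint_left]
    intro x hxt hxt'
    exact lt_asymm (hxt t' (Ne.symm htt')) (hxt' t htt')
  -- connectedness argument
  obtain ⟨x₀, hx₀⟩ := hDne
  set s₀ := S x₀ with hs₀
  refine ⟨s₀, fun x hx => ?_⟩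
  have hDsub : D ⊆ U s₀ ∪ ⋃ t ∈ {t : Fin m | t ≠ s₀}, U t := by
    intro y hy
    by_cases h : S y = s₀
    · exact Or.inl (h ▸ hxU y hy)
    · exact Or.inr (Set.mem_biUnion h (hxU y hy))
  have hvopen : IsOpen (⋃ t ∈ {t : Fin m | t ≠ s₀}, U t) :=
    isOpen_biUnion fun t _ => hUopen t
  have hdisjv : Disjoint (U s₀) (⋃ t ∈ {t : Fin m | t ≠ s₀}, U t) := by
    rw [Set.disjoint_iUnion₂_right]
    intro t ht
    exact hUdisj s₀ t (Ne.symm ht)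
  have hDU : D ⊆ U s₀ := by
    refine (hDcv.isPreconnected).subset_left_of_subset_union (hUopen s₀) hvopen hdisjv hDsub
      ⟨x₀, hx₀, hxU x₀ hx₀⟩
  have hxs : S x = s₀ := by
    by_contra h
    exact (Set.disjoint_left.mp (hUdisj (S x) s₀ h)) (hxU x hx) (hDU hx)
  exact hxs ▸ hS x hx
end

section
/- Let H be a real Hilbert space, let Ω₁, ..., Ω_m be nonempty closed convex subsets with union Ω, let D ⊆ H be convex, and suppose for each x ∈ D the projection P_Ω(x) is unique. Fix s and x, y ∈ D with P_Ω(x) ∈ Ω_s. Define E := {α ∈ [0,1] : P_Ω(βx + (1-β)y) ∈ Ω_s for all β ∈ [α,1]} and γ := inf E. If the map x ↦ P_Ω(x) restricted to the segment [y,x] has the property that the preimage of each closed union ⋃_{ℓ≠s} Ω_ℓ is closed, then γ ∈ E. -/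
theorem stmt_7 {H : Type*} [NormedAddCommGroup H] [InnerProductSpace ℝ H] [CompleteSpace H]
    {m : ℕ} (hm : 0 < m) (Ω : Fin m → Set H)
    (hne : ∀ s, (Ω s).Nonempty) (hcl : ∀ s, IsClosed (Ω s)) (hcv : ∀ s, Convex ℝ (Ω s))
    {D : Set H} (hDcv : Convex ℝ D)
    (P : H → H)
    (hP : ∀ x ∈ D, P x ∈ (⋃ s, Ω s) ∧ ‖x - P x‖ = Metric.infDist x (⋃ s, Ω s))
    (huniq : ∀ x ∈ D, ∀ w, w ∈ (⋃ s, Ω s) → ‖x - w‖ = Metric.infDist x (⋃ s, Ω s) → w = P x)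
    (s : Fin m) {x y : H} (hx : x ∈ D) (hy : y ∈ D) (hPx : P x ∈ Ω s)
    (E : Set ℝ)
    (hE : E = {α : ℝ | α ∈ Set.Icc (0 : ℝ) 1 ∧
      ∀ β ∈ Set.Icc α 1, P (β • x + (1 - β) • y) ∈ Ω s})
    (hclosed : IsClosed {β : ℝ | β ∈ Set.Icc (0 : ℝ) 1 ∧
      P (β • x + (1 - β) • y) ∈ ⋃ ℓ ∈ {ℓ : Fin m | ℓ ≠ s}, Ω ℓ}) :
    sInf E ∈ E := by
  subst hE
  set Ωu := ⋃ t, Ω t with hΩu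
  have hone : (1 : ℝ) ∈ {α : ℝ | α ∈ Set.Icc (0 : ℝ) 1 ∧
      ∀ β ∈ Set.Icc α 1, P (β • x + (1 - β) • y) ∈ Ω s} := by
    refine ⟨⟨zero_le_one, le_refl 1⟩, ?_⟩
    intro β hβ
    have hβ1 : β = 1 := le_antisymm hβ.2 hβ.1
    subst hβ1
    simpa using hPx
  have hEne : Set.Nonempty {α : ℝ | α ∈ Set.Icc (0 : ℝ) 1 ∧
      ∀ β ∈ Set.Icc α 1, P (β • x + (1 - β) • y) ∈ Ω s} := ⟨1, hone⟩
  have hbdd : BddBelow {α : ℝ | α ∈ Set.Icc (0 : ℝ) 1 ∧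
      ∀ β ∈ Set.Icc α 1, P (β • x + (1 - β) • y) ∈ Ω s} := ⟨0, fun a ha => ha.1.1⟩
  set γ := sInf {α : ℝ | α ∈ Set.Icc (0 : ℝ) 1 ∧
      ∀ β ∈ Set.Icc α 1, P (β • x + (1 - β) • y) ∈ Ω s} with hγ
  have hγ0 : 0 ≤ γ := le_csInf hEne (fun a ha => ha.1.1)
  have hγ1 : γ ≤ 1 := csInf_le hbdd hone
  have hmemD : ∀ β ∈ Set.Icc (0 : ℝ) 1, β • x + (1 - β) • y ∈ D := by
    intro β hβ
    exact hDcv hx hy hβ.1 (by linarith [hβ.2]) (by ring)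
  -- for β strictly above γ
  have key : ∀ β : ℝ, γ < β → β ≤ 1 → P (β • x + (1 - β) • y) ∈ Ω s := by
    intro β hγβ hβ1
    obtain ⟨α, hαE, hαβ⟩ := exists_lt_of_csInf_lt hEne hγβ
    exact hαE.2 β ⟨hαβ.le, hβ1⟩
  have key2 : P (γ • x + (1 - γ) • y) ∈ Ω s := by
    rcases eq_or_lt_of_le hγ1 with h | h
    · rw [h]; simpa using hPx
    · -- continuity argument
      set C := {β : ℝ | Metric.infDist (β • x + (1 - β) • y) Ωu
          = Metric.infDist (β • x + (1 - β) • y) (Ω s)} with hC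
      have hfg : Set.Ioc γ 1 ⊆ C := by
        intro β hβ
        have hPβ := key β hβ.1 hβ.2
        have hD : β • x + (1 - β) • y ∈ D := hmemD β ⟨le_trans hγ0 hβ.1.le, hβ.2⟩
        have h1 := (hP _ hD).2
        refine le_antisymm ?_ ?_
        · exact Metric.infDist_le_infDist_of_subset (Set.subset_iUnion Ω s) (hne s)
        · calc Metric.infDist (β • x + (1 - β) • y) (Ω s)
              ≤ dist (β • x + (1 - β) • y) (P (β • x + (1 - β) • y)) :=
                Metric.infDist_le_dist_of_mem hPβ
            _ = ‖(β • x + (1 - β) • y) - P (β • x + (1 - β) • y)‖ := dist_eq_norm _ _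
            _ = Metric.infDist (β • x + (1 - β) • y) Ωu := h1
      have hcont : Continuous fun β : ℝ => β • x + (1 - β) • y := by
        apply Continuous.add
        · exact continuous_id.smul continuous_const
        · exact (continuous_const.sub continuous_id).smul continuous_const
      have hCcl : IsClosed C :=
        isClosed_eq ((Metric.continuous_infDist_pt Ωu).comp hcont)
          ((Metric.continuous_infDist_pt (Ω s)).comp hcont)
      have hγC : γ ∈ C := by
        have h1 : γ ∈ closure (Set.Ioc γ 1) := by
          rw [closure_Ioc h.ne]
          exact ⟨le_refl _, hγ1⟩
        exact (hCcl.closure_subset_iff.2 hfg) h1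
      -- nearest point to z in Ω s
      set z := γ • x + (1 - γ) • y with hz
      have hDz : z ∈ D := hmemD γ ⟨hγ0, hγ1⟩
      obtain ⟨v, hvΩs, hv⟩ :=
        exists_norm_eq_iInf_of_complete_convex (hne s) (hcl s).isComplete (hcv s) z
      have hvdist : ‖z - v‖ = Metric.infDist z (Ω s) := by
        rw [hv, Metric.infDist_eq_iInf]
        exact iInf_congr fun w : ↥(Ω s) => (dist_eq_norm z (w : H)).symm
      have hveq : v = P z := by
        refine huniq z hDz v (Set.mem_iUnion.2 ⟨s, hvΩs⟩) ?_
        rw [hvdist]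
        exact hγC.symm
      rw [← hveq]; exact hvΩs
  refine ⟨⟨hγ0, hγ1⟩, ?_⟩
  intro β hβ
  rcases eq_or_lt_of_le hβ.1 with h | h
  · rw [← h]; exact key2
  · exact key β h hβ.2
end
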